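/- arXiv:1112.5234 — 2 statements merged into one kernel-verified Lean document; each statement's English description precedes it below -/
import Mathlib

section
/- Let θ ∈ (π, 2π) be a real number and m ≥ 1 an integer. Suppose δ := min({mθ/π}, 1 − {mθ/π}) satisfies δ < min(θ/π − 1, 1 − θ/(2π)), where {x} denotes the fractional part of x. Then ⌈(2m−2)θ/(2π)⌉ < ⌈(2m−1)θ/(2π)⌉. -/
open Real

theorem Int.ceil_sub_lt_ceil_sub {α : Type*} [Field α] [LinearOrder α] [IsStrictOrderedRing α]
    [FloorRing α] {x a b : α} (ha : 1 < a) (hb : b < 1)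
    (hx : Int.fract x < a - 1 ∨ b < Int.fract x) : ⌈x - a⌉ < ⌈x - b⌉ := by
  have hfloor := Int.floor_add_fract x
  have hfract₀ := Int.fract_nonneg x
  have hfract₁ := Int.fract_lt_one x
  rcases hx with hfract | hfract
  · calc ⌈x - a⌉ ≤ ⌊x⌋ - 1 := Int.ceil_le.2 (by push_cast; linarith)
      _ < ⌈x - b⌉ := Int.lt_ceil.2 (by push_cast; linarith)
  · calc ⌈x - a⌉ ≤ ⌊x⌋ := Int.ceil_le.2 (by linarith)
      _ < ⌈x - b⌉ := Int.lt_ceil.2 (by linarith)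

theorem ceil_gap_general (θ : ℝ) (hθ : θ ∈ Set.Ioo π (2 * π)) (m : ℕ)
    (hδ : min (Int.fract ((m : ℝ) * θ / π)) (1 - Int.fract ((m : ℝ) * θ / π))
      < min (θ / π - 1) (1 - θ / (2 * π))) :
    ⌈(2 * (m : ℝ) - 2) * θ / (2 * π)⌉ < ⌈(2 * (m : ℝ) - 1) * θ / (2 * π)⌉ := by
  have hπ := pi_pos
  have hθπ : 1 < θ / π := (one_lt_div hπ).2 hθ.1
  have hθ2π : θ / (2 * π) < 1 := (div_lt_one (by positivity)).2 hθ.2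
  have hfract : Int.fract ((m : ℝ) * θ / π) < θ / π - 1 ∨
      θ / (2 * π) < Int.fract ((m : ℝ) * θ / π) := by
    rcases min_lt_iff.1 hδ with h | h
    · exact .inl (h.trans_le (min_le_left _ _))
    · exact .inr (by linarith [h.trans_le (min_le_right _ _)])
  have hshift₂ : (2 * (m : ℝ) - 2) * θ / (2 * π) = m * θ / π - θ / π := by field_simp
  have hshift₁ : (2 * (m : ℝ) - 1) * θ / (2 * π) = m * θ / π - θ / (2 * π) := by field_simp
  rw [hshift₂, hshift₁]
  exact Int.ceil_sub_lt_ceil_sub hθπ hθ2π hfract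

/-- The ceiling gap (5.42)-(5.43) in Lemma 5.2. -/
theorem ceil_gap (θ : ℝ) (hθ : θ ∈ Set.Ioo π (2 * π)) (m : ℕ) (hm : 1 ≤ m)
    (hδ : min (Int.fract ((m : ℝ) * θ / π)) (1 - Int.fract ((m : ℝ) * θ / π))
      < min (θ / π - 1) (1 - θ / (2 * π))) :
    ⌈(2 * (m : ℝ) - 2) * θ / (2 * π)⌉ < ⌈(2 * (m : ℝ) - 1) * θ / (2 * π)⌉ :=
  ceil_gap_general θ hθ m hδ
end

section
/- Let k, s ≥ 1, let M : ℕ → ℕ be a function (Morse-type numbers), and let b : ℕ → ℕ be the odd-sphere Betti number pattern: b_q = 2 if q = 2k+2l with l ≥ k and k | l; b_q = 1 if q = 2k+2l with l ≥ 0 and not (l ≥ k and k | l); b_q = 0 otherwise. Suppose the Morse inequalities hold: for every q, ∑_{i=0}^{q} (−1)^{q−i} M_i ≥ ∑_{i=0}^{q} (−1)^{q−i} b_i. Then it is impossible that M_0 − M_1 + ⋯ + M_{4ks+2k} = ∑_{q=0}^{4ks+2k} (−1)^q M_q = 2s(k+1). -/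
private lemma sign_flip {Q i : ℕ} (hQ : Even Q) (h : i ≤ Q) :
    ((-1 : ℤ)) ^ (Q - i) = (-1) ^ i := by
  have hadd : (Q - i) + i = Q := Nat.sub_add_cancel h
  have h1 : ((-1 : ℤ)) ^ (Q - i) * (-1) ^ i = 1 := by
    rw [← pow_add, hadd, hQ.neg_one_pow]
  have h2 : ((-1 : ℤ)) ^ i * (-1) ^ i = 1 := by
    rw [← pow_add]; exact (Even.add_self i).neg_one_pow
  calc ((-1 : ℤ)) ^ (Q - i) = (-1) ^ (Q - i) * ((-1) ^ i * (-1) ^ i) := by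
        rw [h2, mul_one]
    _ = ((-1) ^ (Q - i) * (-1) ^ i) * (-1) ^ i := by ring
    _ = (-1) ^ i := by rw [h1, one_mul]

section aux

open Classical

variable {k : ℕ} {b : ℕ → ℕ}

private lemma b_zero
    (hb : ∀ q : ℕ, b q =
      if ∃ l : ℕ, q = 2 * k + 2 * l ∧ k ≤ l ∧ k ∣ l then 2
      else if ∃ l : ℕ, q = 2 * k + 2 * l then 1 else 0)
    {q : ℕ} (h : ¬ ∃ l : ℕ, q = 2 * k + 2 * l) : b q = 0 := by
  rw [hb]
  rw [if_neg, if_neg h]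
  rintro ⟨l, hl, -⟩
  exact h ⟨l, hl⟩

private lemma b_eval
    (hb : ∀ q : ℕ, b q =
      if ∃ l : ℕ, q = 2 * k + 2 * l ∧ k ≤ l ∧ k ∣ l then 2
      else if ∃ l : ℕ, q = 2 * k + 2 * l then 1 else 0)
    (l : ℕ) :
    b (2 * k + 2 * l) = if k ≤ l ∧ k ∣ l then 2 else 1 := by
  rw [hb]
  by_cases h : k ≤ l ∧ k ∣ l
  · rw [if_pos ⟨l, rfl, h⟩, if_pos h]
  · rw [if_neg, if_pos ⟨l, rfl⟩, if_neg h]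
    rintro ⟨l', hl', hle, hdvd⟩
    have : l' = l := by omega
    exact h (this ▸ ⟨hle, hdvd⟩)

private lemma b_partial_sum (hk : 1 ≤ k)
    (hb : ∀ q : ℕ, b q =
      if ∃ l : ℕ, q = 2 * k + 2 * l ∧ k ≤ l ∧ k ∣ l then 2
      else if ∃ l : ℕ, q = 2 * k + 2 * l then 1 else 0)
    (m : ℕ) :
    ∑ i ∈ Finset.range (2 * k + 2 * m + 1), (-1 : ℤ) ^ i * (b i : ℤ)
      = (m : ℤ) + 1 + (m / k : ℕ) := by
  induction m with
  | zero =>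
    have hr : 2 * k + 2 * 0 + 1 = 2 * k + 1 := by omega
    rw [hr, Finset.sum_range_succ]
    have hz : ∑ i ∈ Finset.range (2 * k), (-1 : ℤ) ^ i * (b i : ℤ) = 0 := by
      apply Finset.sum_eq_zero
      intro i hi
      simp only [Finset.mem_range] at hi
      have : b i = 0 := b_zero hb (by rintro ⟨l, hl⟩; omega)
      rw [this]; simp
    have hb0 : b (2 * k) = 1 := by
      have h := b_eval hb 0
      rw [if_neg (fun hc => absurd hc.1 (by omega))] at h
      simpa using h
    have hsgn : ((-1 : ℤ)) ^ (2 * k) = 1 := by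
      rw [pow_mul]; norm_num
    rw [hz, hb0, hsgn]
    simp
  | succ m ih =>
    have hrange : 2 * k + 2 * (m + 1) + 1 = (2 * k + 2 * m + 1) + 1 + 1 := by omega
    rw [hrange, Finset.sum_range_succ, Finset.sum_range_succ, ih]
    have hodd : b (2 * k + 2 * m + 1) = 0 := by
      apply b_zero hb
      rintro ⟨l, hl⟩; omega
    have heq : 2 * k + 2 * m + 1 + 1 = 2 * k + 2 * (m + 1) := by omega
    rw [hodd, heq, b_eval hb (m + 1)]
    have hsgn : ((-1 : ℤ)) ^ (2 * k + 2 * (m + 1)) = 1 := by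
      rw [show 2 * k + 2 * (m + 1) = 2 * (k + (m + 1)) by ring, pow_mul]; norm_num
    rw [hsgn]
    simp only [Nat.cast_zero, mul_zero, add_zero, one_mul]
    have hdivsucc := @Nat.succ_div m k
    by_cases hd : k ∣ m + 1
    · have hle : k ≤ m + 1 := Nat.le_of_dvd (by omega) hd
      rw [if_pos hd] at hdivsucc
      rw [if_pos (show k ≤ m + 1 ∧ k ∣ m + 1 from ⟨hle, hd⟩), hdivsucc]
      push_cast
      ring
    · rw [if_neg hd] at hdivsucc
      rw [if_neg (fun hc => hd hc.2), hdivsucc]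
      push_cast
      ring

end aux

/- The contradiction (5.30) in Case 1 of Lemma 5.1: no Morse-type numbers can satisfy
both the Morse inequalities with respect to the odd-sphere Betti numbers and the
alternating-sum identity. -/
open Classical in
theorem no_morse_numbers (k s : ℕ) (hk : 1 ≤ k) (hs : 1 ≤ s) (b : ℕ → ℕ)
    (hb : ∀ q : ℕ, b q =
      if ∃ l : ℕ, q = 2 * k + 2 * l ∧ k ≤ l ∧ k ∣ l then 2
      else if ∃ l : ℕ, q = 2 * k + 2 * l then 1 else 0) :
    ¬ ∃ M : ℕ → ℕ,
      (∀ q : ℕ, (∑ i ∈ Finset.range (q + 1), (-1 : ℤ) ^ (q - i) * (M i : ℤ))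
          ≥ ∑ i ∈ Finset.range (q + 1), (-1 : ℤ) ^ (q - i) * (b i : ℤ))
      ∧ (∑ q ∈ Finset.range (4 * k * s + 2 * k + 1), (-1 : ℤ) ^ q * (M q : ℤ))
          = 2 * s * (k + 1) := by
  rintro ⟨M, hM, hsum⟩
  set Q := 4 * k * s + 2 * k with hQdef
  have hQeven : Even Q := ⟨2 * k * s + k, by rw [hQdef]; ring⟩
  have hineq := hM Q
  have hMrw : ∑ i ∈ Finset.range (Q + 1), (-1 : ℤ) ^ (Q - i) * (M i : ℤ)
      = ∑ i ∈ Finset.range (Q + 1), (-1 : ℤ) ^ i * (M i : ℤ) := by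
    refine Finset.sum_congr rfl fun i hi => ?_
    rw [sign_flip hQeven (by simp only [Finset.mem_range] at hi; omega)]
  have hbrw : ∑ i ∈ Finset.range (Q + 1), (-1 : ℤ) ^ (Q - i) * (b i : ℤ)
      = ∑ i ∈ Finset.range (Q + 1), (-1 : ℤ) ^ i * (b i : ℤ) := by
    refine Finset.sum_congr rfl fun i hi => ?_
    rw [sign_flip hQeven (by simp only [Finset.mem_range] at hi; omega)]
  rw [hMrw, hbrw] at hineq
  have hQform : Q + 1 = 2 * k + 2 * (2 * k * s) + 1 := by rw [hQdef]; ring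
  have hbsum := b_partial_sum hk hb (2 * k * s)
  have hdiv : (2 * k * s) / k = 2 * s := by
    rw [show 2 * k * s = k * (2 * s) by ring, Nat.mul_div_cancel_left _ (by omega)]
  rw [hdiv] at hbsum
  rw [hQform, hbsum] at hineq
  rw [← hQform, hsum] at hineq
  push_cast at hineq
  nlinarith
end
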